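/- arXiv:2308.14581 — 2 statements merged into one kernel-verified Lean document; each statement's English description precedes it below -/
import Mathlib

section
/- In the n-th Łukasiewicz chain Ł_n = {0, 1/n, ..., (n-1)/n, 1} with operations x ⊕ y = min(x+y, 1), x ⊙ y = max(x+y-1, 0), ¬x = 1-x, a subset S ⊆ Ł_n containing 0 and 1 and closed under ⊕, ⊙, ¬ equals Ł_d = {0, 1/d, ..., 1} for some divisor d of n; conversely, for every divisor d of n, the set {k/d : 0 ≤ k ≤ d} is closed under ⊕, ⊙, and ¬. -/
/-!
Index the elements of a subalgebra `S ⊆ Ł_n` by their numerators `K = {k | k/n ∈ S}`.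
Since `x ⊙ ¬y = max (x - y) 0`, the set `K` is closed under truncated subtraction, hence under
`a ↦ a % b`; so the least positive `g ∈ K` divides every element of `K`, in particular `n`, and
`n - j * g ∈ K` for all `j` shows that `K` contains every multiple of `g` up to `n`. With
`n = d * g` this says `S = Ł_d`.
-/

namespace Nat

variable {K : Set ℕ}

theorem sub_mul_mem_of_tsub_mem (hsub : ∀ a ∈ K, ∀ b ∈ K, a - b ∈ K) {a b : ℕ}
    (ha : a ∈ K) (hb : b ∈ K) (j : ℕ) : a - j * b ∈ K := by
  induction j with
  | zero => simpa using ha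
  | succ j ih => simpa only [succ_mul, Nat.sub_sub] using hsub _ ih _ hb

theorem mod_mem_of_tsub_mem (hsub : ∀ a ∈ K, ∀ b ∈ K, a - b ∈ K) {a b : ℕ}
    (ha : a ∈ K) (hb : b ∈ K) : a % b ∈ K := by
  rw [mod_eq_sub_div_mul]
  exact sub_mul_mem_of_tsub_mem hsub ha hb _

theorem dvd_of_tsub_mem {g : ℕ} (hsub : ∀ a ∈ K, ∀ b ∈ K, a - b ∈ K) (hg : g ∈ K)
    (hg_pos : 0 < g) (hg_min : ∀ k ∈ K, 0 < k → g ≤ k) {a : ℕ} (ha : a ∈ K) : g ∣ a := by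
  refine dvd_of_mod_eq_zero (Nat.eq_zero_of_not_pos fun hpos => ?_)
  exact absurd (hg_min _ (mod_mem_of_tsub_mem hsub ha hg) hpos) (not_le.2 (mod_lt a hg_pos))

theorem exists_eq_mul_of_tsub_mem {n : ℕ} (hsub : ∀ a ∈ K, ∀ b ∈ K, a - b ∈ K) (hn : n ∈ K)
    (hn0 : n ≠ 0) (hK : ∀ k ∈ K, k ≤ n) :
    ∃ d g, n = d * g ∧ ∀ k, k ∈ K ↔ ∃ m ≤ d, k = m * g := by
  classical
  have hex : ∃ k, 0 < k ∧ k ∈ K := ⟨n, pos_of_ne_zero hn0, hn⟩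
  obtain ⟨hg_pos, hg⟩ := Nat.find_spec hex
  have hdvd : ∀ a ∈ K, Nat.find hex ∣ a :=
    fun a ha => dvd_of_tsub_mem hsub hg hg_pos (fun k hk hk0 => Nat.find_min' hex ⟨hk0, hk⟩) ha
  set g := Nat.find hex
  set d := n / g
  have hnd : n = d * g := (Nat.div_mul_cancel (hdvd n hn)).symm
  refine ⟨d, g, hnd, fun k => ⟨fun hk => ?_, ?_⟩⟩
  · obtain ⟨m, rfl⟩ := hdvd k hk
    refine ⟨m, Nat.le_of_mul_le_mul_right ?_ hg_pos, mul_comm _ _⟩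
    rw [mul_comm m, ← hnd]
    exact hK _ hk
  · rintro ⟨m, hm, rfl⟩
    have hsub_n := sub_mul_mem_of_tsub_mem hsub hn hg (d - m)
    rwa [hnd, ← Nat.sub_mul, Nat.sub_sub_self hm] at hsub_n

end Nat

section NatCastDiv

variable {α : Type*} [Field α] [LinearOrder α] [IsStrictOrderedRing α]

theorem natCast_tsub_div (a b d : ℕ) :
    ((a - b : ℕ) : α) / d = max ((a : α) / d - b / d) 0 := by
  rcases le_total a b with hab | hab
  · rw [Nat.sub_eq_zero_of_le hab, Nat.cast_zero, zero_div, max_eq_right]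
    exact sub_nonpos.2 (div_le_div_of_nonneg_right (by exact_mod_cast hab) d.cast_nonneg)
  · rw [Nat.cast_sub hab, sub_div, max_eq_left]
    exact sub_nonneg.2 (div_le_div_of_nonneg_right (by exact_mod_cast hab) d.cast_nonneg)

theorem min_natCast_div_add_natCast_div (k l d : ℕ) :
    min ((k : α) / d + l / d) 1 = ((min (k + l) d : ℕ) : α) / d := by
  rcases eq_or_ne d 0 with rfl | hd
  · simp
  · rw [Nat.cast_min, ← min_div_div_right d.cast_nonneg, div_self (Nat.cast_ne_zero.2 hd),
      Nat.cast_add, add_div]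

theorem max_natCast_div_add_natCast_div_sub_one {d : ℕ} (hd : d ≠ 0) (k l : ℕ) :
    max ((k : α) / d + l / d - 1) 0 = ((k + l - d : ℕ) : α) / d := by
  rw [natCast_tsub_div, div_self (Nat.cast_ne_zero.2 hd), Nat.cast_add, add_div]

theorem one_sub_natCast_div {k d : ℕ} (hk : k ≤ d) (hd : d ≠ 0) :
    1 - (k : α) / d = ((d - k : ℕ) : α) / d := by
  rw [Nat.cast_sub hk, sub_div, div_self (Nat.cast_ne_zero.2 hd)]

end NatCastDiv

def lukChain (d : ℕ) : Set ℚ := {x | ∃ k : ℕ, k ≤ d ∧ x = (k : ℚ) / d}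

theorem ne_zero_of_one_mem_lukChain {d : ℕ} (h : (1 : ℚ) ∈ lukChain d) : d ≠ 0 := by
  rintro rfl
  obtain ⟨k, -, hk⟩ := h
  rw [Nat.cast_zero, div_zero] at hk
  exact one_ne_zero hk

theorem min_add_mem_lukChain {d : ℕ} {x y : ℚ} (hx : x ∈ lukChain d) (hy : y ∈ lukChain d) :
    min (x + y) 1 ∈ lukChain d := by
  obtain ⟨k, -, rfl⟩ := hx
  obtain ⟨l, -, rfl⟩ := hy
  exact ⟨_, min_le_right _ _, min_natCast_div_add_natCast_div k l d⟩

theorem max_add_sub_one_mem_lukChain {d : ℕ} {x y : ℚ} (hx : x ∈ lukChain d)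
    (hy : y ∈ lukChain d) : max (x + y - 1) 0 ∈ lukChain d := by
  obtain ⟨k, hk, rfl⟩ := hx
  obtain ⟨l, hl, rfl⟩ := hy
  rcases eq_or_ne d 0 with rfl | hd
  · exact ⟨0, le_rfl, by simp⟩
  · exact ⟨_, by omega, max_natCast_div_add_natCast_div_sub_one hd k l⟩

theorem one_sub_mem_lukChain {d : ℕ} (hd : d ≠ 0) {x : ℚ} (hx : x ∈ lukChain d) :
    1 - x ∈ lukChain d := by
  obtain ⟨k, hk, rfl⟩ := hx
  exact ⟨d - k, Nat.sub_le d k, one_sub_natCast_div hk hd⟩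

theorem exists_eq_lukChain_of_tsub_mem {n : ℕ} {S : Set ℚ} (hS : S ⊆ lukChain n) (h1 : 1 ∈ S)
    (hsub : ∀ x ∈ S, ∀ y ∈ S, max (x - y) 0 ∈ S) :
    ∃ d : ℕ, d ∣ n ∧ 0 < d ∧ S = lukChain d := by
  have hn : n ≠ 0 := ne_zero_of_one_mem_lukChain (hS h1)
  set K : Set ℕ := {k | k ≤ n ∧ (k : ℚ) / n ∈ S}
  have hKsub : ∀ a ∈ K, ∀ b ∈ K, a - b ∈ K := fun a ha b hb =>
    ⟨(Nat.sub_le a b).trans ha.1, by rw [natCast_tsub_div]; exact hsub _ ha.2 _ hb.2⟩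
  have hnK : n ∈ K := ⟨le_rfl, by rwa [div_self (Nat.cast_ne_zero.2 hn)]⟩
  obtain ⟨d, g, rfl, hK⟩ := Nat.exists_eq_mul_of_tsub_mem hKsub hnK hn fun k hk => hk.1
  have hg : (g : ℚ) ≠ 0 := Nat.cast_ne_zero.2 (right_ne_zero_of_mul hn)
  refine ⟨d, dvd_mul_right d g, Nat.pos_of_ne_zero (left_ne_zero_of_mul hn), ?_⟩
  ext x
  constructor
  · intro hx
    obtain ⟨k, hk, rfl⟩ := hS hx
    obtain ⟨m, hm, rfl⟩ := (hK k).1 ⟨hk, hx⟩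
    exact ⟨m, hm, by push_cast; exact mul_div_mul_right _ _ hg⟩
  · rintro ⟨m, hm, rfl⟩
    have hmK := ((hK (m * g)).2 ⟨m, hm, rfl⟩).2
    push_cast at hmK
    rwa [mul_div_mul_right _ _ hg] at hmK

theorem stmt4_general (n : ℕ)
    (Ln : Set ℚ) (hLn : Ln = {x : ℚ | ∃ k : ℕ, k ≤ n ∧ x = (k : ℚ) / n})
    (oplus odot : ℚ → ℚ → ℚ) (neg : ℚ → ℚ)
    (hoplus : ∀ x y, oplus x y = min (x + y) 1)
    (hodot : ∀ x y, odot x y = max (x + y - 1) 0)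
    (hneg : ∀ x, neg x = 1 - x) :
    (∀ S : Set ℚ, S ⊆ Ln → (0 : ℚ) ∈ S → (1 : ℚ) ∈ S →
      (∀ x ∈ S, ∀ y ∈ S, oplus x y ∈ S) →
      (∀ x ∈ S, ∀ y ∈ S, odot x y ∈ S) →
      (∀ x ∈ S, neg x ∈ S) →
      ∃ d : ℕ, d ∣ n ∧ 0 < d ∧ S = {x : ℚ | ∃ k : ℕ, k ≤ d ∧ x = (k : ℚ) / d}) ∧
    (∀ d : ℕ, d ∣ n → 0 < d →
      (∀ x ∈ {x : ℚ | ∃ k : ℕ, k ≤ d ∧ x = (k : ℚ) / d},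
        ∀ y ∈ {x : ℚ | ∃ k : ℕ, k ≤ d ∧ x = (k : ℚ) / d},
          oplus x y ∈ {x : ℚ | ∃ k : ℕ, k ≤ d ∧ x = (k : ℚ) / d} ∧
          odot x y ∈ {x : ℚ | ∃ k : ℕ, k ≤ d ∧ x = (k : ℚ) / d}) ∧
      (∀ x ∈ {x : ℚ | ∃ k : ℕ, k ≤ d ∧ x = (k : ℚ) / d},
        neg x ∈ {x : ℚ | ∃ k : ℕ, k ≤ d ∧ x = (k : ℚ) / d})) := by
  subst hLn
  refine ⟨fun S hSn _ h1 _ hodS hnegS => ?_, fun d _ hd => ⟨fun x hx y hy => ⟨?_, ?_⟩, fun x hx => ?_⟩⟩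
  · refine exists_eq_lukChain_of_tsub_mem hSn h1 fun x hx y hy => ?_
    have hxy := hodS x hx _ (hnegS y hy)
    rwa [hodot, hneg, show x + (1 - y) - 1 = x - y by ring] at hxy
  · exact (hoplus x y).symm ▸ min_add_mem_lukChain hx hy
  · exact (hodot x y).symm ▸ max_add_sub_one_mem_lukChain hx hy
  · exact (hneg x).symm ▸ one_sub_mem_lukChain hd.ne' hx

/-- Subalgebras of the n-th Łukasiewicz chain `Ł_n ⊆ ℚ` are exactly the chains `Ł_d`
for divisors `d` of `n`. -/
theorem stmt4 (n : ℕ) (hn : 0 < n)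
    (Ln : Set ℚ) (hLn : Ln = {x : ℚ | ∃ k : ℕ, k ≤ n ∧ x = (k : ℚ) / n})
    (oplus odot : ℚ → ℚ → ℚ) (neg : ℚ → ℚ)
    (hoplus : ∀ x y, oplus x y = min (x + y) 1)
    (hodot : ∀ x y, odot x y = max (x + y - 1) 0)
    (hneg : ∀ x, neg x = 1 - x) :
    (∀ S : Set ℚ, S ⊆ Ln → (0 : ℚ) ∈ S → (1 : ℚ) ∈ S →
      (∀ x ∈ S, ∀ y ∈ S, oplus x y ∈ S) →
      (∀ x ∈ S, ∀ y ∈ S, odot x y ∈ S) →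
      (∀ x ∈ S, neg x ∈ S) →
      ∃ d : ℕ, d ∣ n ∧ 0 < d ∧ S = {x : ℚ | ∃ k : ℕ, k ≤ d ∧ x = (k : ℚ) / d}) ∧
    (∀ d : ℕ, d ∣ n → 0 < d →
      (∀ x ∈ {x : ℚ | ∃ k : ℕ, k ≤ d ∧ x = (k : ℚ) / d},
        ∀ y ∈ {x : ℚ | ∃ k : ℕ, k ≤ d ∧ x = (k : ℚ) / d},
          oplus x y ∈ {x : ℚ | ∃ k : ℕ, k ≤ d ∧ x = (k : ℚ) / d} ∧
          odot x y ∈ {x : ℚ | ∃ k : ℕ, k ≤ d ∧ x = (k : ℚ) / d}) ∧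
      (∀ x ∈ {x : ℚ | ∃ k : ℕ, k ≤ d ∧ x = (k : ℚ) / d},
        neg x ∈ {x : ℚ | ∃ k : ℕ, k ≤ d ∧ x = (k : ℚ) / d})) :=
  stmt4_general n Ln hLn oplus odot neg hoplus hodot hneg
end

section
/- Let F be a finite FL_ew-algebra based on a chain (totally ordered). If no element a ∈ F \ {0,1} satisfies a ⊙ a = a, then for every a ∈ F \ {1} there exists n ≥ 1 with aⁿ = 0, where aⁿ denotes the n-fold ⊙-power of a; consequently F satisfies x ∨ ¬(xⁿ) = 1 for some fixed n ≥ 1 (uniform over all x), where ¬x = x → 0. -/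
open scoped Classical

/-- In a finite FL_ew-chain with no nontrivial idempotents, every `a ≠ 1` is nilpotent,
and the equation `x ∨ ¬(xⁿ) = 1` holds for some uniform `n ≥ 1`. -/
theorem stmt5 {F : Type*} [LinearOrder F] [Fintype F] [BoundedOrder F]
    (mul arr : F → F → F)
    (hcomm : ∀ x y, mul x y = mul y x)
    (hassoc : ∀ x y z, mul (mul x y) z = mul x (mul y z))
    (hone : ∀ x, mul x ⊤ = x)
    (hres : ∀ x y z, mul x y ≤ z ↔ x ≤ arr y z)
    (pow : F → ℕ → F)
    (hpow1 : ∀ a, pow a 1 = a)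
    (hpows : ∀ a k, pow a (k + 1) = mul a (pow a k))
    (hnoidem : ∀ a : F, a ≠ ⊥ → a ≠ ⊤ → mul a a ≠ a) :
    (∀ a : F, a ≠ ⊤ → ∃ n : ℕ, 1 ≤ n ∧ pow a n = ⊥) ∧
    (∃ n : ℕ, 1 ≤ n ∧ ∀ x : F, x ⊔ arr (pow x n) ⊥ = ⊤) := by
  -- monotonicity in the first argument
  have hmono : ∀ x x' y : F, x ≤ x' → mul x y ≤ mul x' y := by
    intro x x' y h
    exact (hres x y (mul x' y)).mpr (le_trans h ((hres x' y (mul x' y)).mp le_rfl))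
  -- mul x y ≤ y
  have hle : ∀ x y : F, mul x y ≤ y := by
    intro x y
    calc mul x y ≤ mul ⊤ y := hmono x ⊤ y le_top
    _ = mul y ⊤ := hcomm ⊤ y
    _ = y := hone y
  -- powers are decreasing
  have hdec : ∀ a k, pow a (k + 1) ≤ pow a k := by
    intro a k
    rw [hpows]
    exact hle a (pow a k)
  have hdec' : ∀ a, ∀ j k : ℕ, j ≤ k → pow a k ≤ pow a j := by
    intro a j k h
    induction k with
    | zero => simp_all
    | succ n ih =>
      rcases Nat.lt_or_ge j (n + 1) with h' | h'
      · exact le_trans (hdec a n) (ih (Nat.lt_succ_iff.mp h'))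
      · have : j = n + 1 := le_antisymm h h'
        subst this; exact le_rfl
  -- mul with ⊥ is ⊥
  have hbot : ∀ a : F, mul a ⊥ = ⊥ := by
    intro a
    refine le_antisymm ?_ bot_le
    exact hle a ⊥
  -- once ⊥, always ⊥
  have hstay : ∀ a n m, n ≤ m → pow a n = ⊥ → pow a m = ⊥ := by
    intro a n m h hn
    exact le_antisymm (hn ▸ hdec' a n m h) bot_le
  have main : ∀ a : F, a ≠ ⊤ → ∃ n : ℕ, 1 ≤ n ∧ pow a n = ⊥ := by
    intro a ha
    -- the sequence k ↦ pow a (k+1) is not injective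
    have hnotinj : ¬ Function.Injective (fun k : ℕ => pow a (k + 1)) :=
      fun h => @not_finite F (Infinite.of_injective _ h) (Finite.of_fintype F)
    -- find i < j with pow a (i+1) = pow a (j+1)
    have : ∃ i j : ℕ, i < j ∧ pow a (i + 1) = pow a (j + 1) := by
      by_contra hc
      push_neg at hc
      apply hnotinj
      intro i j hij
      rcases lt_trichotomy i j with h | h | h
      · exact absurd hij (hc i j h)
      · exact h
      · exact absurd hij.symm (hc j i h)
    obtain ⟨i, j, hij, heq⟩ := this
    -- hence pow a (i+2) = pow a (i+1)
    have hstab : pow a (i + 2) = pow a (i + 1) := by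
      refine le_antisymm (hdec a (i + 1)) ?_
      calc pow a (i + 1) = pow a (j + 1) := heq
      _ ≤ pow a (i + 2) := hdec' a (i + 2) (j + 1) (by omega)
    set b := pow a (i + 1) with hb
    have hab : mul a b = b := by
      have := hpows a (i + 1)
      rw [hstab] at this
      exact this.symm
    -- mul (pow a (m+1)) b = b for all m
    have hmul : ∀ m : ℕ, mul (pow a (m + 1)) b = b := by
      intro m
      induction m with
      | zero => rw [hpow1]; exact hab
      | succ m ih =>
        rw [hpows, hassoc, ih, hab]
    have hidem : mul b b = b := hmul i
    have hba : b ≤ a := by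
      have := hdec' a 1 (i + 1) (by omega)
      rwa [hpow1] at this
    have hbtop : b ≠ ⊤ := fun h => ha (le_antisymm le_top (h ▸ hba))
    by_cases hbbot : b = ⊥
    · exact ⟨i + 1, by omega, hbbot⟩
    · exact absurd hidem (hnoidem b hbbot hbtop)
  refine ⟨main, ?_⟩
  -- uniform exponent
  classical
  set g : F → ℕ := fun a => if h : a = ⊤ then 1 else (main a h).choose with hg
  set N : ℕ := 1 + Finset.univ.sup g with hN
  refine ⟨N, by omega, ?_⟩
  intro x
  by_cases hx : x = ⊤
  · simp [hx]
  · have h1 : pow x (g x) = ⊥ := by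
      have := (main x hx).choose_spec.2
      simp only [hg, dif_neg hx]
      exact this
    have h2 : pow x N = ⊥ := by
      refine hstay x (g x) N ?_ h1
      have := Finset.le_sup (f := g) (Finset.mem_univ x)
      omega
    have h3 : arr (pow x N) ⊥ = ⊤ := by
      rw [h2]
      refine le_antisymm le_top ?_
      exact (hres ⊤ ⊥ ⊥).mp (by rw [hcomm, hone])
    rw [h3]; exact sup_top_eq x
end
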